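/- arXiv:2305.06239 — 2 statements merged into one kernel-verified Lean document; each statement's English description precedes it below -/
import Mathlib

section
/- (Csiszár–Kullback–Pinsker inequality.) Let (Ω, μ) be a measure space with 0 < μ(Ω) < ∞, and let u : Ω → ℝ be a nonnegative integrable function with mean ū := (1/μ(Ω)) ∫_Ω u dμ > 0, such that the function x ↦ u(x) log(u(x)/ū) is integrable. Then 4 · μ(Ω) · ū · ∫_Ω u log(u/ū) dμ ≥ (∫_Ω |u − ū| dμ)². -/
/-!
Factor `u - ū = (√u - √ū)(√u + √ū)` and apply Cauchy–Schwarz. Pointwise, `log t ≥ 1 - 1/t` at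
`t = √(u/ū)` gives `(√u - √ū)² ≤ u log(u/ū) - u + ū`, which integrates to the relative entropy
because `∫ u = ū μ(Ω)`; and `(√u + √ū)² ≤ 2u + 2ū` integrates to `4 ū μ(Ω)`.
-/

open MeasureTheory Real

lemma abs_sub_eq_abs_sqrt_sub_sqrt_mul_sqrt_add {a b : ℝ} (ha : 0 ≤ a) (hb : 0 ≤ b) :
    |a - b| = |√a - √b| * (√a + √b) := by
  conv_lhs => rw [← sq_sqrt ha, ← sq_sqrt hb]
  rw [sq_sub_sq, abs_mul, mul_comm, abs_of_nonneg (add_nonneg (sqrt_nonneg a) (sqrt_nonneg b))]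

lemma sq_sqrt_add_sqrt_le {a b : ℝ} (ha : 0 ≤ a) (hb : 0 ≤ b) :
    (√a + √b) ^ 2 ≤ 2 * a + 2 * b := by
  nlinarith [sq_nonneg (√a - √b), sq_sqrt ha, sq_sqrt hb]

lemma sq_sqrt_sub_sqrt_le_mul_log_div_sub_add {a b : ℝ} (ha : 0 ≤ a) (hb : 0 < b) :
    (√a - √b) ^ 2 ≤ a * log (a / b) - a + b := by
  rcases ha.eq_or_lt with rfl | ha
  · simp [sq_sqrt hb.le]
  have hsa := sqrt_pos.2 ha
  have hsb := sqrt_pos.2 hb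
  have hlog : √a - √b ≤ √a * log (√a / √b) := by
    have := one_sub_inv_le_log_of_pos (div_pos hsa hsb)
    rw [inv_div] at this
    calc √a - √b = √a * (1 - √b / √a) := by field_simp
      _ ≤ √a * log (√a / √b) := mul_le_mul_of_nonneg_left this hsa.le
  have hlog_sqrt : log (a / b) = 2 * log (√a / √b) := by
    rw [log_div ha.ne' hb.ne', log_div hsa.ne' hsb.ne', log_sqrt ha.le, log_sqrt hb.le]
    ring
  rw [hlog_sqrt]
  nlinarith [mul_le_mul_of_nonneg_left hlog hsa.le, sq_sqrt ha.le, sq_sqrt hb.le]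

theorem sq_integral_mul_le_integral_sq_mul_integral_sq {α : Type*} [MeasurableSpace α]
    {μ : Measure α} {f g : α → ℝ} (hf : MemLp f 2 μ) (hg : MemLp g 2 μ) :
    (∫ x, f x * g x ∂μ) ^ 2 ≤ (∫ x, f x ^ 2 ∂μ) * ∫ x, g x ^ 2 ∂μ := by
  have hfg : Integrable (fun x => f x * g x) μ := hf.integrable_mul hg
  have hff := hf.integrable_sq
  have hquad : ∀ t : ℝ, 0 ≤ (∫ x, f x ^ 2 ∂μ) * (t * t) + (-2 * ∫ x, f x * g x ∂μ) * t
      + ∫ x, g x ^ 2 ∂μ := by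
    intro t
    calc 0 ≤ ∫ x, (t ^ 2 * f x ^ 2 - 2 * t * (f x * g x)) + g x ^ 2 ∂μ :=
          integral_nonneg fun x => show (0:ℝ) ≤ _ by nlinarith [sq_nonneg (t * f x - g x)]
      _ = _ := by
        have hlin : Integrable (fun x => t ^ 2 * f x ^ 2 - 2 * t * (f x * g x)) μ :=
          (hff.const_mul _).sub (hfg.const_mul _)
        rw [integral_add hlin hg.integrable_sq,
          integral_sub (hff.const_mul _) (hfg.const_mul _), integral_const_mul, integral_const_mul]
        ring
  have := discrim_le_zero hquad
  rw [discrim] at this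
  nlinarith

section

variable {Ω : Type*} [MeasurableSpace Ω] {μ : Measure Ω} {u : Ω → ℝ} {c : ℝ}

lemma memLp_two_sqrt (hu : Integrable u μ) (hu0 : ∀ᵐ x ∂μ, 0 ≤ u x) :
    MemLp (fun x => √(u x)) 2 μ := by
  refine (memLp_two_iff_integrable_sq
    (continuous_sqrt.comp_aestronglyMeasurable hu.aestronglyMeasurable)).2 ?_
  refine hu.congr ?_
  filter_upwards [hu0] with x hx using (sq_sqrt hx).symm

variable [IsFiniteMeasure μ]

lemma integral_sq_sqrt_sub_sqrt_le_integral_mul_log (hu : Integrable u μ)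
    (hu0 : ∀ᵐ x ∂μ, 0 ≤ u x) (hc : 0 < c) (hmean : ∫ x, u x ∂μ = c * μ.real Set.univ)
    (hlog : Integrable (fun x => u x * log (u x / c)) μ) :
    ∫ x, (√(u x) - √c) ^ 2 ∂μ ≤ ∫ x, u x * log (u x / c) ∂μ := by
  have hint : Integrable (fun x => u x * log (u x / c) - u x) μ := hlog.sub hu
  calc ∫ x, (√(u x) - √c) ^ 2 ∂μ ≤ ∫ x, u x * log (u x / c) - u x + c ∂μ := by
        refine integral_mono_of_nonneg (ae_of_all _ fun x => sq_nonneg _)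
          (hint.add (integrable_const c)) ?_
        filter_upwards [hu0] with x hx
        exact sq_sqrt_sub_sqrt_le_mul_log_div_sub_add hx hc
    _ = ∫ x, u x * log (u x / c) ∂μ := by
        rw [integral_add hint (integrable_const c), integral_sub hlog hu, integral_const, hmean,
          smul_eq_mul]
        ring

lemma integral_sq_sqrt_add_sqrt_le (hu : Integrable u μ) (hu0 : ∀ᵐ x ∂μ, 0 ≤ u x)
    (hc : 0 ≤ c) (hmean : ∫ x, u x ∂μ = c * μ.real Set.univ) :
    ∫ x, (√(u x) + √c) ^ 2 ∂μ ≤ 4 * c * μ.real Set.univ := by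
  have hint : Integrable (fun x => 2 * u x) μ := hu.const_mul 2
  calc ∫ x, (√(u x) + √c) ^ 2 ∂μ ≤ ∫ x, 2 * u x + 2 * c ∂μ := by
        refine integral_mono_of_nonneg (ae_of_all _ fun x => sq_nonneg _)
          (hint.add (integrable_const _)) ?_
        filter_upwards [hu0] with x hx
        exact sq_sqrt_add_sqrt_le hx hc
    _ = 4 * c * μ.real Set.univ := by
        rw [integral_add hint (integrable_const _), integral_const_mul, integral_const, hmean,
          smul_eq_mul]
        ring

end

theorem csiszar_kullback_pinsker_general
    {Ω : Type*} [MeasurableSpace Ω] (μ : Measure Ω)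
    (u : Ω → ℝ) (hu_int : Integrable u μ) (hu_nonneg : ∀ᵐ x ∂μ, 0 ≤ u x)
    (ubar : ℝ) (hubar : ubar = (∫ x, u x ∂μ) / (μ Set.univ).toReal)
    (hubar_pos : 0 < ubar)
    (hlog_int : Integrable (fun x => u x * Real.log (u x / ubar)) μ) :
    4 * (μ Set.univ).toReal * ubar * (∫ x, u x * Real.log (u x / ubar) ∂μ) ≥
      (∫ x, |u x - ubar| ∂μ) ^ 2 := by
  -- `ubar > 0` already forces `0 < μ univ < ∞`: otherwise `toReal` gives `0` and so does `/ 0`.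
  have hM : (μ Set.univ).toReal ≠ 0 := by
    intro h
    rw [h, div_zero] at hubar
    exact hubar_pos.ne' hubar
  have : IsFiniteMeasure μ := ⟨lt_top_iff_ne_top.2 (ENNReal.toReal_ne_zero.1 hM).2⟩
  have hmean : ∫ x, u x ∂μ = ubar * μ.real Set.univ := by
    rw [hubar]
    exact (div_mul_cancel₀ _ hM).symm
  have hsqrt := memLp_two_sqrt hu_int hu_nonneg
  have hhellinger := integral_sq_sqrt_sub_sqrt_le_integral_mul_log hu_int hu_nonneg hubar_pos
    hmean hlog_int
  calc (∫ x, |u x - ubar| ∂μ) ^ 2 = (∫ x, |√(u x) - √ubar| * (√(u x) + √ubar) ∂μ) ^ 2 := by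
        congr 1
        refine integral_congr_ae ?_
        filter_upwards [hu_nonneg] with x hx
        exact abs_sub_eq_abs_sqrt_sub_sqrt_mul_sqrt_add hx hubar_pos.le
    _ ≤ (∫ x, |√(u x) - √ubar| ^ 2 ∂μ) * ∫ x, (√(u x) + √ubar) ^ 2 ∂μ :=
        sq_integral_mul_le_integral_sq_mul_integral_sq (hsqrt.sub (memLp_const _)).abs
          (hsqrt.add (memLp_const _))
    _ ≤ (∫ x, u x * log (u x / ubar) ∂μ) * (4 * ubar * μ.real Set.univ) := by
        simp_rw [sq_abs]
        exact mul_le_mul hhellinger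
          (integral_sq_sqrt_add_sqrt_le hu_int hu_nonneg hubar_pos.le hmean)
          (integral_nonneg fun x => sq_nonneg _)
          ((integral_nonneg fun x => sq_nonneg _).trans hhellinger)
    _ = 4 * (μ Set.univ).toReal * ubar * ∫ x, u x * log (u x / ubar) ∂μ := by
        rw [measureReal_def]
        ring

/-- Csiszár–Kullback–Pinsker inequality: for a finite measure space `(Ω, μ)` with
`0 < μ(Ω) < ∞` and a nonnegative integrable `u` with positive mean `ū`, such that
`u log(u/ū)` is integrable,
`4 μ(Ω) ū ∫ u log(u/ū) ≥ (∫ |u − ū|)²`. -/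
theorem csiszar_kullback_pinsker
    {Ω : Type*} [MeasurableSpace Ω] (μ : Measure Ω)
    (hμ0 : 0 < μ Set.univ) (hμfin : μ Set.univ < ⊤)
    (u : Ω → ℝ) (hu_int : Integrable u μ) (hu_nonneg : ∀ᵐ x ∂μ, 0 ≤ u x)
    (ubar : ℝ) (hubar : ubar = (∫ x, u x ∂μ) / (μ Set.univ).toReal)
    (hubar_pos : 0 < ubar)
    (hlog_int : Integrable (fun x => u x * Real.log (u x / ubar)) μ) :
    4 * (μ Set.univ).toReal * ubar * (∫ x, u x * Real.log (u x / ubar) ∂μ) ≥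
      (∫ x, |u x - ubar| ∂μ) ^ 2 :=
  csiszar_kullback_pinsker_general μ u hu_int hu_nonneg ubar hubar hubar_pos hlog_int
end

section
/- For all real numbers x ≥ 0 and y > 0, the inequality x·log(x/y) − x + y ≥ (√x − √y)² holds. -/
/-!
With `a = √x` and `b = √y` the inequality reads `2 a² log (a / b) ≥ 2 a (a - b)`, which is `a²`
times the tangent-line bound `log t ≥ 1 - 1 / t` at `t = a / b`.
-/

open Real

lemma mul_sub_le_sq_mul_log_div {a b : ℝ} (ha : 0 ≤ a) (hb : 0 < b) :
    a * (a - b) ≤ a ^ 2 * log (a / b) := by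
  rcases ha.eq_or_lt with rfl | ha
  · simp
  have h : 1 - b / a ≤ log (a / b) := by
    simpa using one_sub_inv_le_log_of_pos (div_pos ha hb)
  calc a * (a - b) = a ^ 2 * (1 - b / a) := by field_simp
    _ ≤ a ^ 2 * log (a / b) := by gcongr

/-- For all `x ≥ 0` and `y > 0`, `x·log(x/y) − x + y ≥ (√x − √y)²`. -/
theorem log_inequality_sqrt (x y : ℝ) (hx : 0 ≤ x) (hy : 0 < y) :
    x * Real.log (x / y) - x + y ≥ (Real.sqrt x - Real.sqrt y) ^ 2 := by
  have hsx : √x ^ 2 = x := sq_sqrt hx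
  have hsy : √y ^ 2 = y := sq_sqrt hy.le
  have hlog : log (√x / √y) = log (x / y) / 2 := by
    rw [← sqrt_div' x hy.le, log_sqrt (div_nonneg hx hy.le)]
  have hbound := mul_sub_le_sq_mul_log_div (sqrt_nonneg x) (sqrt_pos.mpr hy)
  rw [hlog, hsx] at hbound
  rw [sub_sq, hsx, hsy]
  linarith
end
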